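/- In the Dynin-Folland group 𝐇_{n,2}, for any X ∈ ℝ^{2n+1} and (𝒫,𝒬,𝒮) ∈ 𝐇_{n,2}, there exists 𝒬' ∈ ℝ^{2n+1} such that (X,0,0)·(𝒫,𝒬,𝒮) = (0,𝒬',𝒮')·(X⊙𝒫, 0, 0), where 𝒮' = 𝒮 + ⟨𝒬, X⊙((1/2)𝒫)⟩. -/

import Mathlib

noncomputable section

abbrev Hgrp (n : ℕ) := (Fin n → ℝ) × (Fin n → ℝ) × ℝ

def hdot {n : ℕ} (p q : Fin n → ℝ) : ℝ := ∑ i, p i * q i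

/-- The Heisenberg group law on `ℝ^{2n+1}`. -/
def hmul {n : ℕ} (X Y : Hgrp n) : Hgrp n :=
  (X.1 + Y.1, X.2.1 + Y.2.1,
    X.2.2 + Y.2.2 + (1 / 2) * (hdot X.1 Y.2.1 - hdot X.2.1 Y.1))

/-- The Heisenberg Lie bracket on `ℝ^{2n+1}`. -/
def hbr {n : ℕ} (X Y : Hgrp n) : Hgrp n := (0, 0, hdot X.1 Y.2.1 - hdot X.2.1 Y.1)

/-- `ad*(𝒫)(𝒬') = (z'v, -z'u, 0)` for `𝒫 = (u,v,w)`, `𝒬' = (x',y',z')`. -/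
def adstar {n : ℕ} (P Q : Hgrp n) : Hgrp n := (Q.2.2 • P.2.1, -(Q.2.2 • P.1), 0)

/-- The standard inner product on `ℝ^{2n+1}`. -/
def hinner {n : ℕ} (X Y : Hgrp n) : ℝ := hdot X.1 Y.1 + hdot X.2.1 Y.2.1 + X.2.2 * Y.2.2

/-- Elements `(𝒫, 𝒬, 𝒮)` of the Dynin-Folland Lie algebra/group. -/
abbrev DF (n : ℕ) := Hgrp n × Hgrp n × ℝ

/-- The Dynin-Folland Lie bracket. -/
def dfbr {n : ℕ} (A B : DF n) : DF n :=
  (hbr A.1 B.1,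
   (1 / 2 : ℝ) • (adstar A.1 B.2.1 - adstar B.1 A.2.1),
   hinner A.1 B.2.1 - hinner A.2.1 B.1)

/-- The Dynin-Folland group law. -/
def dfmul {n : ℕ} (A B : DF n) : DF n :=
  (hmul A.1 B.1,
   A.2.1 + B.2.1 + (1 / 4 : ℝ) • (adstar A.1 B.2.1 - adstar B.1 A.2.1),
   A.2.2 + B.2.2 + (1 / 2) * (hinner A.1 B.2.1 - hinner A.2.1 B.1)
     - (1 / 8) * hinner (A.2.1 - B.2.1) (hbr A.1 B.1))

/-! Both sides have `𝒫`-component `X ⊙ 𝒫`. Since `ad*(·)(𝒬)` only sees the last coordinate of `𝒬`,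
the `𝒬`-components agree for `𝒬' = 𝒬 + ¼ (ad*(X)(𝒬) + ad*(X ⊙ 𝒫)(𝒬))`. For the `𝒮`-components,
`t ↦ X ⊙ (t𝒫)` is affine, so `X ⊙ (½𝒫)` is the midpoint of `X` and `X ⊙ 𝒫`; together with
`⟨ad*(X)(𝒬), X ⊙ 𝒫⟩ = -⟨𝒬, [X, 𝒫]⟩` and `⟨ad*(Y)(𝒬), Y⟩ = 0` all cross terms cancel. -/

section Heisenberg

variable {n : ℕ}

lemma hdot_eq_dotProduct (p q : Fin n → ℝ) : hdot p q = p ⬝ᵥ q := rfl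

lemma hinner_comm (X Y : Hgrp n) : hinner X Y = hinner Y X := by
  simp only [hinner, hdot_eq_dotProduct, dotProduct_comm X.1, dotProduct_comm X.2.1, mul_comm X.2.2]

lemma hinner_add_right (X Y Z : Hgrp n) : hinner X (Y + Z) = hinner X Y + hinner X Z := by
  simp only [hinner, hdot_eq_dotProduct, Prod.fst_add, Prod.snd_add, dotProduct_add]
  ring

lemma hinner_smul_right (X Y : Hgrp n) (t : ℝ) : hinner X (t • Y) = t * hinner X Y := by
  simp only [hinner, hdot_eq_dotProduct, Prod.smul_fst, Prod.smul_snd, dotProduct_smul, smul_eq_mul]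
  ring

lemma hinner_add_left (X Y Z : Hgrp n) : hinner (X + Y) Z = hinner X Z + hinner Y Z := by
  rw [hinner_comm, hinner_add_right, hinner_comm Z, hinner_comm Z]

lemma hinner_smul_left (X Y : Hgrp n) (t : ℝ) : hinner (t • X) Y = t * hinner X Y := by
  rw [hinner_comm, hinner_smul_right, hinner_comm]

lemma hinner_zero_right (X : Hgrp n) : hinner X 0 = 0 := by
  simpa using hinner_smul_right X 0 0

lemma hinner_zero_left (X : Hgrp n) : hinner 0 X = 0 := by
  rw [hinner_comm, hinner_zero_right]

lemma hinner_neg_left (X Y : Hgrp n) : hinner (-X) Y = -hinner X Y := by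
  simpa using hinner_smul_left X Y (-1)

lemma hmul_zero_left (Y : Hgrp n) : hmul 0 Y = Y := by
  simp [hmul, hdot]

lemma hmul_smul_right (X P : Hgrp n) (t : ℝ) : hmul X (t • P) = (1 - t) • X + t • hmul X P := by
  refine Prod.ext ?_ (Prod.ext ?_ ?_)
  · simp only [hmul, Prod.fst_add, Prod.smul_fst]
    module
  · simp only [hmul, Prod.fst_add, Prod.snd_add, Prod.smul_fst, Prod.smul_snd]
    module
  · simp only [hmul, hdot_eq_dotProduct, Prod.snd_add, Prod.smul_snd, Prod.smul_fst,
      dotProduct_smul, smul_eq_mul]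
    ring

lemma hbr_zero_left (Y : Hgrp n) : hbr 0 Y = 0 := by
  simp [hbr, hdot]

lemma hinner_hbr (Q X P : Hgrp n) :
    hinner Q (hbr X P) = Q.2.2 * (hdot X.1 P.2.1 - hdot X.2.1 P.1) := by
  simp [hinner, hbr, hdot]

lemma adstar_zero_left (Q : Hgrp n) : adstar 0 Q = 0 := by
  simp [adstar]

lemma adstar_zero_right (P : Hgrp n) : adstar P 0 = 0 := by
  simp [adstar]

lemma adstar_snd_snd (P Q : Hgrp n) : (adstar P Q).2.2 = 0 := rfl

lemma adstar_congr_right {P Q Q' : Hgrp n} (h : Q.2.2 = Q'.2.2) : adstar P Q = adstar P Q' := by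
  simp only [adstar, h]

lemma hinner_adstar_left (A Q B : Hgrp n) :
    hinner (adstar A Q) B = Q.2.2 * (hdot A.2.1 B.1 - hdot A.1 B.2.1) := by
  simp only [hinner, adstar, hdot_eq_dotProduct, smul_dotProduct, neg_dotProduct, smul_eq_mul]
  ring

lemma hinner_adstar_self (A Q : Hgrp n) : hinner (adstar A Q) A = 0 := by
  rw [hinner_adstar_left, hdot_eq_dotProduct, hdot_eq_dotProduct, dotProduct_comm, sub_self,
    mul_zero]

lemma hinner_adstar_hmul (X P Q : Hgrp n) :
    hinner (adstar X Q) (hmul X P) = -hinner Q (hbr X P) := by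
  simp only [hinner_adstar_left, hinner_hbr, hmul, hdot_eq_dotProduct, dotProduct_add,
    dotProduct_comm X.2.1 X.1]
  ring

lemma dfmul_zero_zero_left (X P Q : Hgrp n) (S : ℝ) :
    dfmul ((X, 0, 0) : DF n) (P, Q, S) =
      (hmul X P, Q + (1 / 4 : ℝ) • adstar X Q,
        S + (1 / 2) * hinner X Q + (1 / 8) * hinner Q (hbr X P)) := by
  simp only [dfmul, adstar_zero_right, hinner_zero_left, zero_sub, hinner_neg_left, sub_zero,
    zero_add]
  refine Prod.ext rfl (Prod.ext rfl ?_)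
  ring

lemma dfmul_zero_zero_right (Y Q : Hgrp n) (S : ℝ) :
    dfmul ((0, Q, S) : DF n) (Y, 0, 0) =
      (Y, Q - (1 / 4 : ℝ) • adstar Y Q, S - (1 / 2) * hinner Q Y) := by
  simp only [dfmul, hmul_zero_left, adstar_zero_left, hbr_zero_left, hinner_zero_right, zero_sub,
    smul_neg, mul_neg, mul_zero, sub_zero, add_zero, ← sub_eq_add_neg]

end Heisenberg

/-- In `𝐇_{n,2}`: `(X,0,0)·(𝒫,𝒬,𝒮) = (0,𝒬',𝒮')·(X⊙𝒫,0,0)` for some `𝒬'`,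
where `𝒮' = 𝒮 + ⟨𝒬, X ⊙ ((1/2)𝒫)⟩`. -/
theorem dynin_folland_master_identity (n : ℕ) (X : Hgrp n) (P Q : Hgrp n) (S : ℝ) :
    ∃ Q' : Hgrp n,
      dfmul ((X, 0, 0) : DF n) ((P, Q, S) : DF n)
        = dfmul ((0, Q', S + hinner Q (hmul X ((1 / 2 : ℝ) • P))) : DF n)
            ((hmul X P, 0, 0) : DF n) := by
  set Q' := Q + (1 / 4 : ℝ) • (adstar X Q + adstar (hmul X P) Q)
  have hQ'_snd_snd : Q.2.2 = Q'.2.2 := by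
    simp [Q', adstar_snd_snd]
  have hinner_Q' : hinner Q' (hmul X P) = hinner Q (hmul X P) - 1 / 4 * hinner Q (hbr X P) := by
    rw [hinner_add_left, hinner_smul_left, hinner_add_left, hinner_adstar_hmul, hinner_adstar_self]
    ring
  refine ⟨Q', ?_⟩
  rw [dfmul_zero_zero_left, dfmul_zero_zero_right, ← adstar_congr_right hQ'_snd_snd]
  refine Prod.ext rfl (Prod.ext ?_ ?_)
  · simp only [Q', smul_add]
    abel
  · rw [hinner_Q', hmul_smul_right, hinner_add_right, hinner_smul_right, hinner_smul_right,
      hinner_comm X Q]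
    ring
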